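/- For 0 < α < 1 and λ > 0, the hazard function h(x) = 2αλ e^{-2λx}(1-e^{-2λx})^{α-1}/(1-(1-e^{-2λx})^α) of the TLE distribution is strictly decreasing on (0,∞). -/

import Mathlib

open Real Set

/-- Strict Bernoulli-type inequality: for `0 < α < 1` and `u ∈ (0,1)`,
`u ^ α < 1 - α + α * u`. -/
lemma TLE_key_ineq (α : ℝ) (hα0 : 0 < α) (hα1 : α < 1) {u : ℝ}
    (hu : u ∈ Set.Ioo (0 : ℝ) 1) : u ^ α < 1 - α + α * u := by
  set ψ : ℝ → ℝ := fun t => 1 - α + α * t - t ^ α with hψ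
  have hcont : Continuous fun t : ℝ => t ^ α := by
    rw [continuous_iff_continuousAt]
    intro x
    exact Real.continuousAt_rpow_const x α (Or.inr hα0.le)
  have hanti : StrictAntiOn ψ (Set.Icc 0 1) := by
    apply strictAntiOn_of_deriv_neg (convex_Icc 0 1)
    · exact ((continuous_const.add (continuous_const.mul continuous_id)).sub hcont).continuousOn
    · intro t ht
      rw [interior_Icc] at ht
      have ht0 : (0:ℝ) < t := ht.1
      have hd : HasDerivAt ψ (α - α * t ^ (α - 1)) t := by
        have h1 : HasDerivAt (fun t : ℝ => t ^ α) (α * t ^ (α - 1)) t :=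
          Real.hasDerivAt_rpow_const (Or.inl ht0.ne')
        have h2 : HasDerivAt (fun t : ℝ => 1 - α + α * t) α t := by
          simpa using (hasDerivAt_id t).const_mul α |>.const_add (1 - α)
        exact h2.sub h1
      rw [hd.deriv]
      have : (1:ℝ) < t ^ (α - 1) :=
        (Real.one_lt_rpow_iff_of_pos ht0).mpr (Or.inr ⟨ht.2, by linarith⟩)
      nlinarith
  have h1 : ψ 1 < ψ u :=
    hanti ⟨hu.1.le, hu.2.le⟩ ⟨zero_le_one, le_refl 1⟩ hu.2
  have : ψ 1 = 0 := by simp [hψ]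
  simp only [hψ] at h1 this
  linarith

/-- The function `(1-u) u^(α-1) / (1-u^α)` is strictly decreasing on `(0,1)`. -/
lemma TLE_G_strictAnti (α : ℝ) (hα0 : 0 < α) (hα1 : α < 1) :
    StrictAntiOn (fun u : ℝ => (1 - u) * u ^ (α - 1) / (1 - u ^ α)) (Set.Ioo 0 1) := by
  have hder : ∀ u ∈ Set.Ioo (0:ℝ) 1,
      HasDerivAt (fun u : ℝ => (1 - u) * u ^ (α - 1) / (1 - u ^ α))
        ((((-1) * u ^ (α - 1) + (1 - u) * ((α - 1) * u ^ (α - 2))) * (1 - u ^ α)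
            - (1 - u) * u ^ (α - 1) * (-(α * u ^ (α - 1)))) / (1 - u ^ α) ^ 2) u := by
    intro u hu
    have hu0 : (0:ℝ) < u := hu.1
    have hne : (1:ℝ) - u ^ α ≠ 0 := by
      have : u ^ α < 1 := Real.rpow_lt_one hu0.le hu.2 hα0
      linarith
    have h1 : HasDerivAt (fun u : ℝ => u ^ (α - 1)) ((α - 1) * u ^ (α - 2)) u := by
      simpa [show α - 1 - 1 = α - 2 from by ring] using
        Real.hasDerivAt_rpow_const (x := u) (p := α - 1) (Or.inl hu0.ne')
    have hc : HasDerivAt (fun u : ℝ => 1 - u) (-1) u := by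
      simpa using (hasDerivAt_id u).const_sub 1
    have hN : HasDerivAt (fun u : ℝ => (1 - u) * u ^ (α - 1))
        ((-1) * u ^ (α - 1) + (1 - u) * ((α - 1) * u ^ (α - 2))) u := hc.mul h1
    have hD : HasDerivAt (fun u : ℝ => 1 - u ^ α) (-(α * u ^ (α - 1))) u := by
      simpa using (Real.hasDerivAt_rpow_const (x := u) (p := α) (Or.inl hu0.ne')).const_sub 1
    exact hN.div hD hne
  apply strictAntiOn_of_deriv_neg (convex_Ioo 0 1)
  · exact fun u hu => (hder u hu).continuousAt.continuousWithinAt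
  · intro u hu
    rw [interior_Ioo] at hu
    rw [(hder u hu).deriv]
    have hu0 : (0:ℝ) < u := hu.1
    have hB : 0 < u ^ (α - 2) := Real.rpow_pos_of_pos hu0 _
    have hAB : u ^ (α - 1) = u ^ (α - 2) * u := by
      rw [show α - 1 = α - 2 + 1 from by ring, Real.rpow_add_one hu0.ne']
    have hAA : u ^ (α - 1) * u ^ (α - 1) = u ^ (α - 2) * u ^ α := by
      rw [← Real.rpow_add hu0, ← Real.rpow_add hu0]
      congr 1; ring
    have hC1 : u ^ α < 1 - α + α * u := TLE_key_ineq α hα0 hα1 hu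
    have hCl : u ^ α < 1 := Real.rpow_lt_one hu0.le hu.2 hα0
    have hDpos : (0:ℝ) < 1 - u ^ α := by linarith
    apply div_neg_of_neg_of_pos _ (pow_pos hDpos 2)
    have hnum : ((-1) * u ^ (α - 1) + (1 - u) * ((α - 1) * u ^ (α - 2))) * (1 - u ^ α)
        - (1 - u) * u ^ (α - 1) * (-(α * u ^ (α - 1)))
        = u ^ (α - 2) * (α - 1 - α * u + u ^ α) := by
      linear_combination (u ^ α - 1) * hAB + α * (1 - u) * hAA
    rw [hnum]
    exact mul_neg_of_pos_of_neg hB (by linarith)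

theorem TLE_hazard_strictAnti (α lam : ℝ) (hα0 : 0 < α) (hα1 : α < 1) (hlam : 0 < lam) :
    StrictAntiOn (fun x : ℝ =>
      2 * α * lam * Real.exp (-2 * lam * x) * (1 - Real.exp (-2 * lam * x)) ^ (α - 1)
        / (1 - (1 - Real.exp (-2 * lam * x)) ^ α)) (Set.Ioi 0) := by
  have hG := TLE_G_strictAnti α hα0 hα1
  intro x hx y hy hxy
  have hx0 : (0:ℝ) < x := hx
  have hy0 : (0:ℝ) < y := hy
  dsimp only
  set u := 1 - Real.exp (-2 * lam * x) with hu_def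
  set v := 1 - Real.exp (-2 * lam * y) with hv_def
  have heu : Real.exp (-2 * lam * x) = 1 - u := by rw [hu_def]; ring
  have hev : Real.exp (-2 * lam * y) = 1 - v := by rw [hv_def]; ring
  have hu : u ∈ Set.Ioo (0:ℝ) 1 := by
    constructor
    · have : Real.exp (-2 * lam * x) < 1 := Real.exp_lt_one_iff.mpr (by nlinarith)
      simp only [hu_def]; linarith
    · have := Real.exp_pos (-2 * lam * x)
      simp only [hu_def]; linarith
  have hv : v ∈ Set.Ioo (0:ℝ) 1 := by
    constructor
    · have : Real.exp (-2 * lam * y) < 1 := Real.exp_lt_one_iff.mpr (by nlinarith)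
      simp only [hv_def]; linarith
    · have := Real.exp_pos (-2 * lam * y)
      simp only [hv_def]; linarith
  have huv : u < v := by
    have : Real.exp (-2 * lam * y) < Real.exp (-2 * lam * x) :=
      Real.exp_lt_exp.mpr (by nlinarith)
    simp only [hu_def, hv_def]; linarith
  have hGlt : (1 - v) * v ^ (α - 1) / (1 - v ^ α)
      < (1 - u) * u ^ (α - 1) / (1 - u ^ α) := hG hu hv huv
  rw [heu, hev]
  have hc : (0:ℝ) < 2 * α * lam := by positivity
  calc 2 * α * lam * (1 - v) * v ^ (α - 1) / (1 - v ^ α)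
      = 2 * α * lam * ((1 - v) * v ^ (α - 1) / (1 - v ^ α)) := by ring
    _ < 2 * α * lam * ((1 - u) * u ^ (α - 1) / (1 - u ^ α)) :=
        (mul_lt_mul_iff_right₀ hc).mpr hGlt
    _ = 2 * α * lam * (1 - u) * u ^ (α - 1) / (1 - u ^ α) := by ring
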